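/- Let d ≥ 1, Δ = 2^d, n, k ≥ 1, and let a, b : {1,…,n} → {1,…,Δ}² be sequences of points such that the multiset T has at most k distinct points. For each i ∈ {0,…,d} and j ∈ {1,…,2d}, let v_i^j be chosen independently and uniformly at random from {0,…,2^i−1}², and set Y = (1/2)·Σ_{i=0}^{d} 2^i·min_{1≤j≤2d} D_{2^i,v_i^j}(a,b). Then the probability that Y ≤ 16k·EMD(a,b) is at least 1 − (d+1)/2^{2d}. -/

import Mathlib

/-- ℓ1 norm on ℤ². -/
def l1 (p : ℤ × ℤ) : ℤ := |p.1| + |p.2|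

/-- Earth-mover distance between the multisets {a 1,…,a n} and {b 1,…,b n}:
the minimum over permutations σ of ∑ i, ‖a i − b (σ i)‖₁. -/
noncomputable def EMD {n : ℕ} (a b : Fin n → ℤ × ℤ) : ℤ :=
  Finset.univ.inf' Finset.univ_nonempty
    (fun σ : Equiv.Perm (Fin n) => ∑ i, l1 (a i - b (σ i)))

/-- The grid cell of a point p for the grid of cell size L shifted by v
(floor division; `/` on ℤ with positive divisor is floor division). -/
def cell (L : ℕ) (v p : ℤ × ℤ) : ℤ × ℤ :=
  ((p.1 - v.1) / (L : ℤ), (p.2 - v.2) / (L : ℤ))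

/-- The grid ℓ1-difference D_{L,v}(a,b) = Σ_{c∈ℤ²} |#{i : cell(a i) = c} − #{i : cell(b i) = c}|,
where the (finite) sum is taken over the cells actually occupied (all other terms vanish). -/
def D {n : ℕ} (L : ℕ) (v : ℤ × ℤ) (a b : Fin n → ℤ × ℤ) : ℤ :=
  ∑ c ∈ ((Finset.univ.image fun i => cell L v (a i)) ∪
         (Finset.univ.image fun i => cell L v (b i))),
    |((Finset.univ.filter fun i => cell L v (a i) = c).card : ℤ) -
      ((Finset.univ.filter fun i => cell L v (b i) = c).card : ℤ)|

/-- The sample space for choosing, independently and uniformly, a shift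
w (i, j) ∈ {0,…,2^i−1}² for every level i ∈ {0,…,d} and every j ∈ {1,…,2d}
(here the uniform distribution on this product set is the product of the
per-coordinate uniform distributions). -/
noncomputable def shiftSpace (d : ℕ) : Finset ((Fin (d + 1) × Fin (2 * d)) → ℤ × ℤ) :=
  Fintype.piFinset fun p =>
    Finset.Ico (0 : ℤ) (2 ^ (p.1 : ℕ) : ℤ) ×ˢ Finset.Ico (0 : ℤ) (2 ^ (p.1 : ℕ) : ℤ)

/-!
Fix an optimal matching `σ`. At level `i` (cell side `L = 2^i`, radius `R = L / (8k)`) call a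
shift bad if some grid line passes within `R` of one of the at most `k` points of `T`. At most
`4kRL ≤ L²/2` shifts are bad, so all `2d` independent shifts of a level are bad with probability
at most `4^{-d}`, and a union bound over the `d + 1` levels gives the failure probability.
When every level has a good shift, each matched pair `(a t, b (σ t))` of length at most `R`
lies in a single cell, and `D` is at most twice the number of pairs the grid splits. Summing
`2^i` over the levels at which a pair of length `ℓ` is split is a geometric series bounded by
`16kℓ`, so `Σ 2^i min_j D ≤ 32k EMD`.
-/

open Finset

lemma exists_mem_Ioc_emod_eq_of_ediv_lt {L x y v : ℤ} (hL : 0 < L)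
    (h : (x - v) / L < (y - v) / L) : ∃ z ∈ Ioc x y, z % L = v % L := by
  refine ⟨v + L * ((y - v) / L), mem_Ioc.2 ⟨?_, ?_⟩, Int.add_mul_emod_self_left _ _ _⟩
  · have hx := Int.lt_mul_ediv_self_add (x := x - v) hL
    have : L * ((x - v) / L) + L ≤ L * ((y - v) / L) := by nlinarith
    linarith
  · linarith [Int.mul_ediv_self_le (x := y - v) hL.ne']

/-- The shifts `v ∈ [0, L)` whose grid `v + Lℤ` meets `(y - R, y + R]`. -/
noncomputable def shiftsNear (L R : ℕ) (y : ℤ) : Finset ℤ :=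
  (Ioc (y - R) (y + R)).image (· % (L : ℤ))

lemma card_shiftsNear_le (L R : ℕ) (y : ℤ) : #(shiftsNear L R y) ≤ 2 * R :=
  card_image_le.trans (by simp; omega)

lemma mem_shiftsNear_of_ediv_ne {L R : ℕ} {x y v : ℤ} (hL : 0 < L) (hv : v ∈ Ico 0 (L : ℤ))
    (hxy : |x - y| ≤ R) (h : (x - v) / L ≠ (y - v) / L) : v ∈ shiftsNear L R y := by
  have hL' : (0 : ℤ) < L := by exact_mod_cast hL
  rw [abs_le] at hxy
  obtain ⟨z, hz, hzv⟩ : ∃ z ∈ Ioc (y - R) (y + R), z % L = v % L := by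
    rcases h.lt_or_gt with h | h
    all_goals
      obtain ⟨z, hz, hzv⟩ := exists_mem_Ioc_emod_eq_of_ediv_lt hL' h
      rw [mem_Ioc] at hz
      exact ⟨z, mem_Ioc.2 ⟨by omega, by omega⟩, hzv⟩
  rw [mem_Ico] at hv
  exact mem_image.2 ⟨z, hz, by rw [hzv, Int.emod_eq_of_lt hv.1 hv.2]⟩

/-- The shifts `v ∈ [0, L)²` for which some grid line comes within `R` of a point of `Q`. -/
noncomputable def badShifts (L R : ℕ) (Q : Finset (ℤ × ℤ)) : Finset (ℤ × ℤ) :=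
  Q.biUnion fun q => shiftsNear L R q.1 ×ˢ Ico 0 (L : ℤ) ∪ Ico 0 (L : ℤ) ×ˢ shiftsNear L R q.2

lemma card_badShifts_le (L R : ℕ) (Q : Finset (ℤ × ℤ)) :
    #(badShifts L R Q) ≤ #Q * (4 * R * L) := by
  refine card_biUnion_le.trans
    ((sum_le_card_nsmul _ _ _ fun q _ => ?_).trans_eq (smul_eq_mul _ _))
  grw [card_union_le, card_product, card_product, card_shiftsNear_le, card_shiftsNear_le]
  simp only [Int.card_Ico, sub_zero, Int.toNat_natCast]
  lia

lemma cell_eq_of_notMem_badShifts {L R : ℕ} {Q : Finset (ℤ × ℤ)} {v p q : ℤ × ℤ} (hL : 0 < L)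
    (hv : v ∈ Ico 0 (L : ℤ) ×ˢ Ico 0 (L : ℤ)) (hvQ : v ∉ badShifts L R Q) (hq : q ∈ Q)
    (hpq : l1 (p - q) ≤ R) : cell L v p = cell L v q := by
  rw [mem_product] at hv
  simp only [badShifts, mem_biUnion, mem_union, mem_product, not_exists, not_and, not_or] at hvQ
  obtain ⟨h1, h2⟩ := hvQ q hq
  have := abs_nonneg (p.1 - q.1)
  have := abs_nonneg (p.2 - q.2)
  simp only [l1, Prod.fst_sub, Prod.snd_sub] at hpq
  refine Prod.ext (not_not.1 fun h => h1 ?_ hv.2) (not_not.1 fun h => h2 hv.1 ?_)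
  · exact mem_shiftsNear_of_ediv_ne hL hv.1 (by linarith) h
  · exact mem_shiftsNear_of_ediv_ne hL hv.2 (by linarith) h

lemma sum_abs_card_fiber_sub_le {ι β : Type*} [Fintype ι] [DecidableEq β] (f g : ι → β)
    {S : Finset β} (hf : ∀ t, f t ∈ S) (hg : ∀ t, g t ∈ S) :
    ∑ c ∈ S, |(#{t | f t = c} : ℤ) - #{t | g t = c}| ≤ 2 * #{t | f t ≠ g t} := by
  set E : Finset ι := {t | f t ≠ g t}
  have hfiber : ∀ c, |(#{t | f t = c} : ℤ) - #{t | g t = c}| ≤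
      #{t ∈ E | f t = c} + #{t ∈ E | g t = c} := by
    intro c
    have hdiff : (#{t | f t = c} : ℤ) - #{t | g t = c} =
        ∑ t ∈ E, ((if f t = c then 1 else 0) - if g t = c then 1 else 0) := by
      simp only [card_filter, Nat.cast_sum, Nat.cast_ite, Nat.cast_one, Nat.cast_zero,
        ← sum_sub_distrib]
      refine (sum_filter_of_ne fun t _ h => ?_).symm
      contrapose! h
      simp [h]
    rw [hdiff, card_filter, card_filter]
    push_cast
    refine (abs_sum_le_sum_abs _ _).trans ?_
    rw [← sum_add_distrib]
    exact sum_le_sum fun t _ => by split_ifs <;> simp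
  have hcount : ∀ h : ι → β, (∀ t, h t ∈ S) → ∑ c ∈ S, (#{t ∈ E | h t = c} : ℤ) = #E := by
    intro h hh
    exact_mod_cast (card_eq_sum_card_fiberwise fun t _ => hh t).symm
  calc _ ≤ ∑ c ∈ S, ((#{t ∈ E | f t = c} : ℤ) + #{t ∈ E | g t = c}) :=
        sum_le_sum fun c _ => hfiber c
    _ = 2 * #E := by rw [sum_add_distrib, hcount f hf, hcount g hg, two_mul]

lemma D_le_two_mul_card_cell_ne {n : ℕ} (L : ℕ) (v : ℤ × ℤ) (a b : Fin n → ℤ × ℤ)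
    (σ : Equiv.Perm (Fin n)) : D L v a b ≤ 2 * #{t | cell L v (a t) ≠ cell L v (b (σ t))} := by
  have hperm : ∀ c, #{t | cell L v (b t) = c} = #{t | cell L v (b (σ t)) = c} := fun c =>
    card_equiv σ.symm (by simp)
  simp only [D, hperm]
  exact sum_abs_card_fiber_sub_le _ _ (fun t => mem_union_left _ (mem_image_of_mem _ (mem_univ _)))
    (fun t => mem_union_right _ (mem_image_of_mem _ (mem_univ _)))

lemma D_le_two_mul_card_radius_lt {n L R : ℕ} (hL : 0 < L) {v : ℤ × ℤ} {a b : Fin n → ℤ × ℤ}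
    (σ : Equiv.Perm (Fin n)) (hv : v ∈ Ico 0 (L : ℤ) ×ˢ Ico 0 (L : ℤ))
    (hvb : v ∉ badShifts L R (univ.image b)) :
    D L v a b ≤ 2 * #{t | (R : ℤ) < l1 (a t - b (σ t))} := by
  refine (D_le_two_mul_card_cell_ne L v a b σ).trans ?_
  gcongr with t
  contrapose!
  exact cell_eq_of_notMem_badShifts hL hv hvb (mem_image_of_mem _ (mem_univ _))

lemma sum_filter_two_pow_lt_le (s : Finset ℕ) (M : ℕ) : ∑ i ∈ s with 2 ^ i < M, 2 ^ i ≤ 2 * M := by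
  set s' := {i ∈ s | 2 ^ i < M}
  rcases s'.eq_empty_or_nonempty with h | h
  · simp [h]
  have hmax : 2 ^ s'.max' h < M := (mem_filter.1 (s'.max'_mem h)).2
  calc ∑ i ∈ s', 2 ^ i ≤ 2 ^ (s'.max' h + 1) :=
        (Nat.geomSum_lt le_rfl fun i hi => Nat.lt_succ_of_le (s'.le_max' i hi)).le
    _ ≤ 2 * M := by rw [pow_succ]; omega

lemma sum_two_pow_filter_div_lt_le {k : ℕ} (hk : 0 < k) (s : Finset ℕ) {c : ℤ} (hc : 0 ≤ c) :
    ∑ i ∈ s with ((2 ^ i / (8 * k) : ℕ) : ℤ) < c, (2 : ℤ) ^ i ≤ 16 * k * c := by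
  lift c to ℕ using hc
  have h := sum_filter_two_pow_lt_le s (c * (8 * k))
  simp only [Nat.cast_lt, Nat.div_lt_iff_lt_mul (by omega : 0 < 8 * k)]
  exact_mod_cast h.trans_eq (by ring)

lemma sum_two_pow_mul_card_radius_lt_le {ι : Type*} [Fintype ι] {k : ℕ} (hk : 0 < k)
    (s : Finset ℕ) (c : ι → ℤ) (hc : ∀ t, 0 ≤ c t) :
    ∑ i ∈ s, (2 : ℤ) ^ i * #{t | ((2 ^ i / (8 * k) : ℕ) : ℤ) < c t} ≤ 16 * k * ∑ t, c t := by
  calc _ = ∑ t, ∑ i ∈ s with ((2 ^ i / (8 * k) : ℕ) : ℤ) < c t, (2 : ℤ) ^ i := by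
        simp only [card_filter, Nat.cast_sum, Nat.cast_ite, mul_sum, sum_filter]
        rw [sum_comm]
        simp
    _ ≤ ∑ t, 16 * k * c t := sum_le_sum fun t _ => sum_two_pow_filter_div_lt_le hk s (hc t)
    _ = 16 * k * ∑ t, c t := (mul_sum _ _ _).symm

lemma pow_card_mul_card_filter_forall_mem_le {ι κ α : Type*} [Fintype ι] [DecidableEq ι]
    [Fintype κ] [DecidableEq κ] [DecidableEq α] (F : ι → Finset α) (i : ι) {B : Finset α}
    (hB : 2 * #B ≤ #(F i)) :
    2 ^ Fintype.card κ * #{w ∈ Fintype.piFinset (fun p : ι × κ => F p.1) | ∀ j, w (i, j) ∈ B} ≤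
      #(Fintype.piFinset fun p : ι × κ => F p.1) := by
  set G : ι → Finset α := fun i' => if i' = i then F i ∩ B else F i'
  have hsub : {w ∈ Fintype.piFinset (fun p : ι × κ => F p.1) | ∀ j, w (i, j) ∈ B} ⊆
      Fintype.piFinset fun p : ι × κ => G p.1 := by
    intro w hw
    simp only [mem_filter, Fintype.mem_piFinset] at hw ⊢
    rintro ⟨i', j⟩
    by_cases hi : i' = i
    · subst hi; simpa [G] using ⟨hw.1 (i', j), hw.2 j⟩
    · simpa [G, hi] using hw.1 (i', j)
  have hG : ∀ i', (if i' = i then 2 else 1) * #(G i') ≤ #(F i') := by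
    intro i'
    by_cases hi : i' = i
    · subst hi; simpa [G] using hB.trans' (Nat.mul_le_mul_left 2 (card_le_card inter_subset_right))
    · simp [G, hi]
  calc _ ≤ 2 ^ Fintype.card κ * #(Fintype.piFinset fun p : ι × κ => G p.1) := by gcongr
    _ = ∏ i', ((if i' = i then 2 else 1) * #(G i')) ^ Fintype.card κ := by
        simp only [Fintype.card_piFinset, Fintype.prod_prod_type, prod_const, card_univ, mul_pow,
          prod_mul_distrib, ite_pow, one_pow, prod_ite_eq', mem_univ, if_true]
    _ ≤ ∏ i', #(F i') ^ Fintype.card κ := prod_le_prod' fun i' _ => Nat.pow_le_pow_left (hG i') _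
    _ = _ := by simp [Fintype.card_piFinset, Fintype.prod_prod_type]

lemma one_sub_div_le_card_filter_div {β ι : Type*} [Fintype ι] {S : Finset β} (hS : S.Nonempty)
    {P : β → Prop} [DecidablePred P] {E : ι → β → Prop} [∀ i, DecidablePred (E i)] {N : ℝ}
    (hN : 0 < N) (hP : ∀ w ∈ S, (∀ i, ¬E i w) → P w) (hE : ∀ i, N * #{w ∈ S | E i w} ≤ #S) :
    1 - Fintype.card ι / N ≤ #{w ∈ S | P w} / #S := by
  classical
  have hunion : #{w ∈ S | ¬P w} ≤ ∑ i, #{w ∈ S | E i w} := by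
    refine (card_le_card fun w hw => ?_).trans card_biUnion_le
    obtain ⟨hwS, hwP⟩ := mem_filter.1 hw
    obtain ⟨i, hi⟩ : ∃ i, E i w := by contrapose! hwP; exact hP w hwS hwP
    exact mem_biUnion.2 ⟨i, mem_univ _, mem_filter.2 ⟨hwS, hi⟩⟩
  have hbad : N * #{w ∈ S | ¬P w} ≤ Fintype.card ι * #S := by
    calc N * #{w ∈ S | ¬P w} ≤ ∑ i, N * #{w ∈ S | E i w} := by
          rw [← mul_sum]; gcongr; exact_mod_cast hunion
      _ ≤ ∑ _i : ι, (#S : ℝ) := sum_le_sum fun i _ => hE i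
      _ = _ := by simp
  have hsplit : (#{w ∈ S | P w} : ℝ) + #{w ∈ S | ¬P w} = #S := by
    exact_mod_cast card_filter_add_card_filter_not P
  have hS' : (0 : ℝ) < #S := by exact_mod_cast hS.card_pos
  have hbad' : (#{w ∈ S | ¬P w} : ℝ) ≤ Fintype.card ι * #S / N := by
    rw [le_div_iff₀ hN]; linarith
  rw [le_div_iff₀ hS', sub_mul, one_mul, div_mul_eq_mul_div]
  linarith

lemma two_mul_card_badShifts_le {L k : ℕ} {Q : Finset (ℤ × ℤ)} (hQ : #Q ≤ k) :
    2 * #(badShifts L (L / (8 * k)) Q) ≤ #(Ico 0 (L : ℤ) ×ˢ Ico 0 (L : ℤ)) := by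
  have hR : 8 * k * (L / (8 * k)) ≤ L := Nat.mul_div_le L (8 * k)
  grw [card_badShifts_le, hQ]
  simp only [card_product, Int.card_Ico, sub_zero, Int.toNat_natCast]
  nlinarith

lemma l1_nonneg (p : ℤ × ℤ) : 0 ≤ l1 p := add_nonneg (abs_nonneg _) (abs_nonneg _)

lemma sum_two_pow_mul_inf'_D_le {d m n k : ℕ} (hk : 0 < k) (a b : Fin n → ℤ × ℤ)
    (w : Fin (d + 1) × Fin m → ℤ × ℤ) (H : (univ : Finset (Fin m)).Nonempty)
    (hw : ∀ p, w p ∈ Ico (0 : ℤ) (2 ^ (p.1 : ℕ)) ×ˢ Ico (0 : ℤ) (2 ^ (p.1 : ℕ)))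
    (hgood : ∀ i : Fin (d + 1), ∃ j,
      w (i, j) ∉ badShifts (2 ^ (i : ℕ)) (2 ^ (i : ℕ) / (8 * k)) (univ.image b)) :
    ∑ i : Fin (d + 1), (2 : ℤ) ^ (i : ℕ) * univ.inf' H (fun j => D (2 ^ (i : ℕ)) (w (i, j)) a b)
      ≤ 32 * k * EMD a b := by
  obtain ⟨σ, -, hσ⟩ := exists_mem_eq_inf' univ_nonempty
    fun σ : Equiv.Perm (Fin n) => ∑ t, l1 (a t - b (σ t))
  set N : ℕ → ℤ := fun i => #{t | ((2 ^ i / (8 * k) : ℕ) : ℤ) < l1 (a t - b (σ t))}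
  have hlevel : ∀ i : Fin (d + 1),
      univ.inf' H (fun j => D (2 ^ (i : ℕ)) (w (i, j)) a b) ≤ 2 * N i := by
    intro i
    obtain ⟨j, hj⟩ := hgood i
    refine (inf'_le _ (mem_univ j)).trans (D_le_two_mul_card_radius_lt (by positivity) σ ?_ hj)
    simpa using hw (i, j)
  calc _ ≤ ∑ i : Fin (d + 1), 2 * ((2 : ℤ) ^ (i : ℕ) * N i) := sum_le_sum fun i _ =>
        (mul_le_mul_of_nonneg_left (hlevel i) (by positivity)).trans_eq (by ring)
    _ = 2 * ∑ i ∈ range (d + 1), (2 : ℤ) ^ i * N i := by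
        rw [← mul_sum, Fin.sum_univ_eq_sum_range (fun i => (2 : ℤ) ^ i * N i)]
    _ ≤ 2 * (16 * k * ∑ t, l1 (a t - b (σ t))) := by
        gcongr
        exact sum_two_pow_mul_card_radius_lt_le hk _ _ fun t => l1_nonneg _
    _ = 32 * k * EMD a b := by rw [EMD, hσ]; ring

open scoped Classical in
/-- Lemma, upper bound: with points in {1,…,2^d}², T with at most k
distinct points, and 2d independent uniform shifts per level, setting
Y = (1/2)·Σ_{i=0}^{d} 2^i·min_{1≤j≤2d} D_{2^i,v_i^j}(a,b), the probability that
Y ≤ 16k·EMD(a,b) is at least 1 − (d+1)/2^{2d}. -/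
theorem upper_bound_probability (d n k : ℕ) (hd : 1 ≤ d) (hk : 1 ≤ k)
    (a b : Fin n → ℤ × ℤ)
    (hT : (Finset.univ.image b).card ≤ k) :
    1 - ((d : ℝ) + 1) / 2 ^ (2 * d) ≤
      (((shiftSpace d).filter fun w =>
          (1 / 2 : ℝ) * ∑ i : Fin (d + 1), (2 : ℝ) ^ (i : ℕ) *
            ((Finset.univ.inf' ⟨⟨0, by omega⟩, Finset.mem_univ _⟩
              fun j : Fin (2 * d) => D (2 ^ (i : ℕ)) (w (i, j)) a b : ℤ) : ℝ) ≤
            16 * (k : ℝ) * (EMD a b : ℝ)).card : ℝ) /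
        ((shiftSpace d).card : ℝ) := by
  set Bad : Fin (d + 1) → Finset (ℤ × ℤ) := fun i =>
    badShifts (2 ^ (i : ℕ)) (2 ^ (i : ℕ) / (8 * k)) (univ.image b)
  have hS : (shiftSpace d).Nonempty := ⟨0, Fintype.mem_piFinset.2 fun p => by simp⟩
  calc 1 - ((d : ℝ) + 1) / 2 ^ (2 * d) = 1 - Fintype.card (Fin (d + 1)) / 2 ^ (2 * d) := by simp
    _ ≤ _ := one_sub_div_le_card_filter_div hS (E := fun i w => ∀ j, w (i, j) ∈ Bad i)
        (by positivity) ?good ?rare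
  case good =>
    intro w hw hgood
    push Not at hgood
    have hZ := Int.cast_le (R := ℝ) |>.2 <| sum_two_pow_mul_inf'_D_le hk a b w
      ⟨⟨0, by omega⟩, mem_univ _⟩ (Fintype.mem_piFinset.1 hw) hgood
    push_cast at hZ
    linarith
  case rare =>
    intro i
    have hrare := pow_card_mul_card_filter_forall_mem_le (κ := Fin (2 * d))
      (fun i : Fin (d + 1) => Ico (0 : ℤ) (2 ^ (i : ℕ)) ×ˢ Ico (0 : ℤ) (2 ^ (i : ℕ))) i
      (two_mul_card_badShifts_le hT)
    rw [Fintype.card_fin] at hrare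
    exact_mod_cast hrare
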